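/- Assume nr = (q^p−1)/s for a prime p and a positive integer s, and assume gcd(r, nr/gcd(nr, q−1)) = 1. Then every i ∈ Z_{n,r} satisfies l_i ∈ {1, p}, N_1 = gcd(n, (q−1)/r), and N_p = (n − gcd(n, (q−1)/r))/p. -/

import Mathlib

open scoped Classical

/-- The `q`-cyclotomic coset of `i` modulo `N`, with representatives taken in `{1, …, N}`. -/
noncomputable def cosetOf (q N i : ℕ) : Finset ℕ :=
  (Finset.Icc 1 N).filter (fun x => ∃ j : ℕ, x ≡ i * q ^ j [MOD N])

/-- `Z_{n,r} = {1 + i r : 0 ≤ i ≤ n-1}`. -/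
def Zset (n r : ℕ) : Finset ℕ := (Finset.range n).image (fun i => 1 + i * r)

/-- The collection of `q`-cyclotomic cosets contained in `Z_{n,r}`. -/
noncomputable def cosetsIn (q n r : ℕ) : Finset (Finset ℕ) :=
  (Zset n r).image (fun i => cosetOf q (n * r) i)

/-- `N_l`: the number of `q`-cyclotomic cosets of size `l` contained in `Z_{n,r}`. -/
noncomputable def Ncount (q n r l : ℕ) : ℕ :=
  ((cosetsIn q n r).filter (fun C => C.card = l)).card

/-- Coset leader: the smallest element of a coset. -/
noncomputable def leader (C : Finset ℕ) : ℕ := sInf (C : Set ℕ)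

/-- The sorted (increasing) list of coset leaders of the cosets of size `l` in `Z_{n,r}`. -/
noncomputable def leaderList (q n r l : ℕ) : List ℕ :=
  Finset.sort (((cosetsIn q n r).filter (fun C => C.card = l)).image leader) (· ≤ ·)

/-- `δ_i^{(l)}`: the `i`-th smallest coset leader (1-indexed). -/
noncomputable def delta (q n r l i : ℕ) : ℕ := (leaderList q n r l).getD (i - 1) 0

/-! Since `q ^ p ≡ 1 (mod nr)`, multiplication by `q` permutes `ZMod (nr)`, and the cyclotomic
coset of `i` is the orbit of `i`; its size is the minimal period of `i`, a divisor of the prime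
`p`. The coset of `i` is a singleton iff `nr ∣ i (q - 1)`, which for `i = 1 + jr` reads
`n / g ∣ 1 + jr` with `g = gcd(n, (q - 1)/r)`; as `r` is prime to `n / g`, exactly `g` of the
`n` values of `j` qualify. The cosets partition `Z_{n,r}`, so `N_1 + p N_p = n`. -/

open Finset

namespace Function

open Set

variable {α : Type*} {f : α → α} {x y : α}

theorem ncard_range_iterate (hx : x ∈ periodicPts f) :
    (range fun n => f^[n] x).ncard = minimalPeriod f x := by
  have hrange : (range fun n => f^[n] x) = (fun n => f^[n] x) '' Set.Iio (minimalPeriod f x) := by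
    refine (image_subset_range _ _).antisymm' ?_
    rintro _ ⟨n, rfl⟩
    exact ⟨n % minimalPeriod f x, Nat.mod_lt _ (minimalPeriod_pos_of_mem_periodicPts hx),
      iterate_mod_minimalPeriod_eq⟩
  rw [hrange, iterate_injOn_Iio_minimalPeriod.ncard_image, ncard_Iio_nat]

theorem range_iterate_eq_of_mem (hx : x ∈ periodicPts f) (hy : y ∈ range fun n => f^[n] x) :
    (range fun n => f^[n] y) = range fun n => f^[n] x := by
  obtain ⟨m, rfl⟩ := hy
  obtain ⟨k, hk, hkx⟩ := hx
  refine (range_subset_iff.2 fun n => mem_range.2 ⟨n + m, iterate_add_apply f n m x⟩).antisymm ?_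
  rintro _ ⟨n, rfl⟩
  refine mem_range.2 ⟨n + (k * m - m), ?_⟩
  have hkm : m ≤ k * m := Nat.le_mul_of_pos_left m hk
  rw [← iterate_add_apply, add_assoc, Nat.sub_add_cancel hkm, iterate_add_apply,
    (hkx.mul_const m).eq]

end Function

theorem Finset.sum_card_filter_image_of_partition {α : Type*} [DecidableEq α] (s : Finset α)
    (C : α → Finset α) (hsub : ∀ i ∈ s, C i ⊆ s) (hmem : ∀ i ∈ s, ∀ x ∈ s, C x = C i ↔ x ∈ C i)
    (P : Finset α → Prop) [DecidablePred P] :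
    ∑ D ∈ (s.image C).filter P, #D = #{i ∈ s | P (C i)} := by
  rw [card_eq_sum_card_image C, filter_image]
  refine sum_congr rfl fun D hD => ?_
  obtain ⟨i, hi, rfl⟩ := mem_image.1 hD
  rw [mem_filter] at hi
  congr 1
  ext x
  simp only [mem_filter]
  constructor
  · intro hx
    have hCx := (hmem i hi.1 x (hsub i hi.1 hx)).2 hx
    exact ⟨⟨hsub i hi.1 hx, hCx ▸ hi.2⟩, hCx⟩
  · rintro ⟨⟨hx, -⟩, hCx⟩
    exact (hmem i hi.1 x hx).1 hCx

theorem Nat.card_filter_range_dvd_add_mul {a r : ℕ} (b g : ℕ) (ha : 0 < a)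
    (hra : Nat.Coprime r a) : #{j ∈ range (a * g) | a ∣ b + j * r} = g := by
  have : NeZero a := ⟨ha.ne'⟩
  set u := ZMod.unitOfCoprime r hra
  have hsol : ∀ j, a ∣ b + j * r ↔ j ≡ (-(b : ZMod a) * ↑u⁻¹).val [MOD a] := by
    intro j
    rw [← ZMod.natCast_eq_natCast_iff, ZMod.natCast_zmod_val, Units.eq_mul_inv_iff_mul_eq,
      ← ZMod.natCast_eq_zero_iff, ZMod.coe_unitOfCoprime, eq_neg_iff_add_eq_zero, add_comm]
    push_cast
    rfl
  rw [filter_congr fun j _ => hsol j, ← Nat.count_eq_card_filter_range,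
    Nat.count_modEq_card _ ha, Nat.mul_mod_right, Nat.mul_div_cancel_left _ ha]
  simp

section Cosets

variable {q N : ℕ}

theorem coe_cosetOf (q N i : ℕ) :
    (cosetOf q N i : Set ℕ) =
      Set.Icc 1 N ∩ Nat.cast ⁻¹' Set.range fun j => (· * (q : ZMod N))^[j] (i : ZMod N) := by
  ext x
  simp only [cosetOf, coe_filter, mem_Icc, Set.mem_inter_iff, Set.mem_Icc, Set.mem_preimage,
    Set.mem_range, mul_right_iterate_apply]
  refine and_congr_right fun _ => exists_congr fun j => ?_
  rw [eq_comm, ← ZMod.natCast_eq_natCast_iff]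
  push_cast
  rfl

theorem ncard_Icc_inter_natCast_preimage [NeZero N] (S : Set (ZMod N)) :
    (Set.Icc 1 N ∩ Nat.cast ⁻¹' S).ncard = S.ncard := by
  have hinj : Set.InjOn (Nat.cast : ℕ → ZMod N) (Set.Icc 1 N) := by
    rintro x ⟨hx1, hxN⟩ y ⟨hy1, hyN⟩ hxy
    have h := congrArg ZMod.val (congrArg (· - 1) hxy)
    simp only [← Nat.cast_pred hx1, ← Nat.cast_pred hy1] at h
    rw [ZMod.val_natCast_of_lt (by omega), ZMod.val_natCast_of_lt (by omega)] at h
    omega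
  have himage : Nat.cast '' (Set.Icc 1 N ∩ Nat.cast ⁻¹' S) = S := by
    refine (Set.image_preimage_subset _ _).trans' (Set.image_mono Set.inter_subset_right)
      |>.antisymm fun y hy => ?_
    -- `(y - 1).val + 1` is the representative of `y` in `{1, …, N}`
    refine ⟨(y - 1).val + 1, ⟨⟨by omega, (ZMod.val_lt (y - 1))⟩, ?_⟩, ?_⟩ <;>
      simp [hy]
  conv_rhs => rw [← himage]
  rw [(hinj.mono Set.inter_subset_left).ncard_image]

theorem self_mem_cosetOf {i : ℕ} (hi : i ∈ Icc 1 N) : i ∈ cosetOf q N i :=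
  mem_filter.2 ⟨hi, 0, by rw [pow_zero, mul_one]⟩

variable [NeZero N] (hq : IsUnit (q : ZMod N))
include hq

theorem card_cosetOf (i : ℕ) :
    #(cosetOf q N i) = Function.minimalPeriod (· * (q : ZMod N)) i := by
  rw [← Set.ncard_coe_finset, coe_cosetOf, ncard_Icc_inter_natCast_preimage,
    Function.ncard_range_iterate (hq.mul_left_injective.mem_periodicPts _)]

theorem cosetOf_eq_iff_mem {i x : ℕ} (hx : x ∈ Icc 1 N) :
    cosetOf q N x = cosetOf q N i ↔ x ∈ cosetOf q N i := by
  refine ⟨fun h => h ▸ self_mem_cosetOf hx, fun h => ?_⟩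
  rw [← Finset.mem_coe, coe_cosetOf] at h
  rw [← Finset.coe_inj, coe_cosetOf, coe_cosetOf,
    Function.range_iterate_eq_of_mem (hq.mul_left_injective.mem_periodicPts _) h.2]

theorem card_cosetOf_eq_one_iff (hq0 : 0 < q) (i : ℕ) :
    #(cosetOf q N i) = 1 ↔ N ∣ i * (q - 1) := by
  rw [card_cosetOf hq, Function.minimalPeriod_eq_one_iff_isFixedPt, Function.IsFixedPt,
    ← ZMod.natCast_eq_zero_iff, Nat.cast_mul, Nat.cast_sub hq0, mul_sub, sub_eq_zero]
  simp

end Cosets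

theorem card_cosetOf_eq_one_or_eq {q N p : ℕ} [NeZero N] (hp : p.Prime)
    (hqp : (q : ZMod N) ^ p = 1) (i : ℕ) : #(cosetOf q N i) = 1 ∨ #(cosetOf q N i) = p := by
  rw [card_cosetOf (IsUnit.of_pow_eq_one hqp hp.ne_zero)]
  refine (Nat.dvd_prime hp).1 (Function.IsPeriodicPt.minimalPeriod_dvd ?_)
  simp [Function.IsPeriodicPt, Function.IsFixedPt, mul_right_iterate_apply, hqp]

theorem Nat.dvd_mul_iff_div_gcd_dvd {n t i : ℕ} (hn : 0 < n) : n ∣ i * t ↔ n / n.gcd t ∣ i := by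
  have hg := Nat.gcd_pos_of_pos_left t hn
  calc n ∣ i * t ↔ n / n.gcd t * n.gcd t ∣ i * (t / n.gcd t) * n.gcd t := by
        rw [Nat.div_mul_cancel (Nat.gcd_dvd_left n t), mul_assoc,
          Nat.div_mul_cancel (Nat.gcd_dvd_right n t)]
    _ ↔ n / n.gcd t ∣ i * (t / n.gcd t) := Nat.mul_dvd_mul_iff_right hg
    _ ↔ n / n.gcd t ∣ i := (Nat.coprime_div_gcd_div_gcd hg).dvd_mul_right

section Zset

variable {q n r : ℕ}

theorem one_add_mul_injective (hr : 0 < r) : Function.Injective fun j => 1 + j * r :=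
  fun _ _ h => Nat.eq_of_mul_eq_mul_right hr (Nat.add_left_cancel h)

theorem card_Zset (hr : 0 < r) : #(Zset n r) = n := by
  rw [Zset, card_image_of_injective _ (one_add_mul_injective hr), card_range]

theorem mem_Zset_iff (hr : 0 < r) {x : ℕ} :
    x ∈ Zset n r ↔ x ∈ Icc 1 (n * r) ∧ x ≡ 1 [MOD r] := by
  constructor
  · intro hx
    obtain ⟨j, hj, rfl⟩ := mem_image.1 hx
    rw [mem_range] at hj
    refine ⟨mem_Icc.2 ⟨by omega, by nlinarith⟩, ?_⟩
    simp [Nat.ModEq, Nat.add_mul_mod_self_right]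
  · rintro ⟨hx, hx1⟩
    rw [mem_Icc] at hx
    obtain ⟨j, hj⟩ := (Nat.modEq_iff_dvd' hx.1).1 hx1.symm
    refine mem_image.2 ⟨j, mem_range.2 ?_, by rw [mul_comm]; omega⟩
    exact Nat.lt_of_mul_lt_mul_left (a := r) (by rw [mul_comm r n]; omega)

theorem cosetOf_subset_Zset (hr : 0 < r) (hq1 : q ≡ 1 [MOD r]) {i : ℕ} (hi : i ∈ Zset n r) :
    cosetOf q (n * r) i ⊆ Zset n r := by
  intro x hx
  obtain ⟨hxI, j, hxj⟩ := mem_filter.1 hx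
  rw [mem_Zset_iff hr] at hi ⊢
  refine ⟨hxI, ?_⟩
  simpa using (Nat.ModEq.of_mul_left n hxj).trans (hi.2.mul (hq1.pow j))

theorem mul_Ncount_eq_card_filter (hn : 0 < n) (hr : 0 < r) (hq1 : q ≡ 1 [MOD r])
    (hq : IsUnit (q : ZMod (n * r))) (l : ℕ) :
    l * Ncount q n r l = #{i ∈ Zset n r | #(cosetOf q (n * r) i) = l} := by
  have : NeZero (n * r) := ⟨(Nat.mul_pos hn hr).ne'⟩
  rw [Ncount, cosetsIn, mul_comm, ← sum_const_nat (f := card) fun D hD => (mem_filter.1 hD).2]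
  exact sum_card_filter_image_of_partition (Zset n r) (cosetOf q (n * r))
    (fun i hi => cosetOf_subset_Zset hr hq1 hi)
    (fun i _ x hx => cosetOf_eq_iff_mem hq ((mem_Zset_iff hr).1 hx).1) (#· = l)

theorem card_filter_Zset_card_cosetOf_eq_one (hn : 0 < n) (hr : 0 < r) (hq0 : 0 < q)
    (hrq : r ∣ q - 1) (hq : IsUnit (q : ZMod (n * r)))
    (hg : Nat.gcd r ((n * r) / Nat.gcd (n * r) (q - 1)) = 1) :
    #{i ∈ Zset n r | #(cosetOf q (n * r) i) = 1} = Nat.gcd n ((q - 1) / r) := by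
  have : NeZero (n * r) := ⟨(Nat.mul_pos hn hr).ne'⟩
  obtain ⟨t, ht⟩ := hrq
  have hcop : Nat.Coprime r (n / n.gcd t) := by
    rwa [ht, mul_comm r t, Nat.gcd_mul_right, Nat.mul_div_mul_right _ _ hr] at hg
  have hsingle : ∀ i, #(cosetOf q (n * r) i) = 1 ↔ n / n.gcd t ∣ i := fun i => by
    rw [card_cosetOf_eq_one_iff hq hq0, ht, mul_comm r t, ← mul_assoc,
      Nat.mul_dvd_mul_iff_right hr, Nat.dvd_mul_iff_div_gcd_dvd hn]
  have hsplit : n = n / n.gcd t * n.gcd t := (Nat.div_mul_cancel (Nat.gcd_dvd_left n t)).symm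
  rw [ht, Nat.mul_div_cancel_left _ hr, filter_congr fun i _ => hsingle i, Zset, filter_image,
    card_image_of_injective _ (one_add_mul_injective hr),
    show range n = _ from congrArg range hsplit]
  exact Nat.card_filter_range_dvd_add_mul 1 _ (Nat.div_pos (Nat.gcd_le_left t hn)
    (Nat.gcd_pos_of_pos_left t hn)) hcop

end Zset

theorem stmt15_general (q n r p s : ℕ) (hn : 0 < n)
    (hr : 0 < r) (hrdvd : r ∣ q - 1) (hp : p.Prime) (hs : 0 < s)
    (hnrs : n * r * s = q ^ p - 1)
    (hg : Nat.gcd r ((n * r) / Nat.gcd (n * r) (q - 1)) = 1) :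
    (∀ i ∈ Zset n r, (cosetOf q (n * r) i).card = 1 ∨ (cosetOf q (n * r) i).card = p) ∧
    Ncount q n r 1 = Nat.gcd n ((q - 1) / r) ∧
    Ncount q n r p = (n - Nat.gcd n ((q - 1) / r)) / p := by
  have : NeZero (n * r) := ⟨(Nat.mul_pos hn hr).ne'⟩
  have hqp : q ^ p = n * r * s + 1 := by
    have := Nat.mul_pos (Nat.mul_pos hn hr) hs
    omega
  have hq0 : 0 < q := Nat.pos_of_ne_zero fun h => by simp [h, hp.ne_zero] at hqp
  have hpow : (q : ZMod (n * r)) ^ p = 1 := by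
    rw [← Nat.cast_pow, hqp]
    simp
  have hunit : IsUnit (q : ZMod (n * r)) := IsUnit.of_pow_eq_one hpow hp.ne_zero
  have hq1 : q ≡ 1 [MOD r] := ((Nat.modEq_iff_dvd' hq0).2 hrdvd).symm
  have hcard : ∀ i, #(cosetOf q (n * r) i) = 1 ∨ #(cosetOf q (n * r) i) = p :=
    card_cosetOf_eq_one_or_eq hp hpow
  have hN1 : Ncount q n r 1 = Nat.gcd n ((q - 1) / r) := by
    rw [← one_mul (Ncount q n r 1), mul_Ncount_eq_card_filter hn hr hq1 hunit,
      card_filter_Zset_card_cosetOf_eq_one hn hr hq0 hrdvd hunit hg]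
  have hNp : p * Ncount q n r p = n - Ncount q n r 1 := by
    have hsplit : #{i ∈ Zset n r | #(cosetOf q (n * r) i) = p} =
        #{i ∈ Zset n r | ¬#(cosetOf q (n * r) i) = 1} := by
      refine congrArg card (filter_congr fun i _ => ?_)
      have := hp.one_lt
      rcases hcard i with h | h <;> rw [h] <;> omega
    have htot := card_filter_add_card_filter_not (s := Zset n r)
      (fun i => #(cosetOf q (n * r) i) = 1)
    rw [card_Zset hr] at htot
    rw [mul_Ncount_eq_card_filter hn hr hq1 hunit, hsplit, ← one_mul (Ncount q n r 1),
      mul_Ncount_eq_card_filter hn hr hq1 hunit]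
    omega
  exact ⟨fun i _ => hcard i, hN1, by rw [← hN1, ← hNp, Nat.mul_div_cancel_left _ hp.pos]⟩

theorem stmt15 (q n r p s : ℕ) (hq : IsPrimePow q) (hn : 0 < n) (hco : Nat.Coprime n q)
    (hr : 0 < r) (hrdvd : r ∣ q - 1) (hp : p.Prime) (hs : 0 < s)
    (hnrs : n * r * s = q ^ p - 1)
    (hg : Nat.gcd r ((n * r) / Nat.gcd (n * r) (q - 1)) = 1) :
    (∀ i ∈ Zset n r, (cosetOf q (n * r) i).card = 1 ∨ (cosetOf q (n * r) i).card = p) ∧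
    Ncount q n r 1 = Nat.gcd n ((q - 1) / r) ∧
    Ncount q n r p = (n - Nat.gcd n ((q - 1) / r)) / p :=
  stmt15_general q n r p s hn hr hrdvd hp hs hnrs hg
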